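/- arXiv:1811.12434 — 2 statements merged into one kernel-verified Lean document; each statement's English description precedes it below -/
import Mathlib

section
/- Let (α_k)_{k≥0} be a sequence of nonnegative real numbers satisfying α_k ≤ 1 + δ α_{k-1}² for all k ≥ 1, where δ > 0 satisfies δ ≤ 1/(4(1 + α₀)). Then α_k ≤ 2 + 4^{1-2^k} α₀ for all k ≥ 0. -/
/-!
Write `a = α 0` and `c k = 4 ^ (1 - 2 ^ k)`, so that `c 0 = 1` and `c (k + 1) = c k ^ 2 / 4`.
The bound `2 + c a` is propagated through `x ↦ 1 + δ x²` because, for `δ ≤ 1 / (4 (1 + a))`,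
`(2 + c a)² ≤ 4 (1 + a) (1 + c² a / 4)` is equivalent to `0 ≤ a (c - 2)²`.
-/

lemma four_rpow_one_sub_two_pow_succ (k : ℕ) :
    (4 : ℝ) ^ ((1 : ℝ) - 2 ^ (k + 1)) = ((4 : ℝ) ^ ((1 : ℝ) - 2 ^ k)) ^ 2 / 4 := by
  rw [eq_div_iff four_ne_zero, ← Real.rpow_two, ← Real.rpow_mul zero_le_four,
    ← Real.rpow_add_one four_ne_zero]
  congr 1
  ring

lemma one_add_mul_sq_le_two_add {a c δ x : ℝ} (ha : 0 ≤ a)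
    (hδa : δ ≤ 1 / (4 * (1 + a))) (hx : 0 ≤ x) (hxc : x ≤ 2 + c * a) :
    1 + δ * x ^ 2 ≤ 2 + c ^ 2 / 4 * a := by
  have hpos : 0 < 4 * (1 + a) := by positivity
  have hsq : (2 + c * a) ^ 2 ≤ 4 * (1 + a) * (1 + c ^ 2 / 4 * a) := by
    nlinarith [mul_nonneg ha (sq_nonneg (c - 2))]
  calc 1 + δ * x ^ 2 ≤ 1 + 1 / (4 * (1 + a)) * (2 + c * a) ^ 2 := by
        gcongr
    _ ≤ 1 + (1 + c ^ 2 / 4 * a) := by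
        rw [one_div_mul_eq_div]
        gcongr
        exact (div_le_iff₀' hpos).2 hsq
    _ = 2 + c ^ 2 / 4 * a := by ring

theorem stmt3_general (α : ℕ → ℝ) (δ : ℝ)
    (hnonneg : ∀ k, 0 ≤ α k)
    (hrec : ∀ k : ℕ, 1 ≤ k → α k ≤ 1 + δ * (α (k - 1)) ^ 2)
    (hδ' : δ ≤ 1 / (4 * (1 + α 0))) :
    ∀ k : ℕ, α k ≤ 2 + (4 : ℝ) ^ ((1 : ℝ) - 2 ^ k) * α 0 := by
  intro k
  induction k with
  | zero => norm_num
  | succ k ih =>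
    rw [four_rpow_one_sub_two_pow_succ]
    calc α (k + 1) ≤ 1 + δ * α k ^ 2 := hrec (k + 1) k.succ_pos
      _ ≤ _ := one_add_mul_sq_le_two_add (hnonneg 0) hδ' (hnonneg k) ih

theorem stmt3 (α : ℕ → ℝ) (δ : ℝ)
    (hnonneg : ∀ k, 0 ≤ α k)
    (hrec : ∀ k : ℕ, 1 ≤ k → α k ≤ 1 + δ * (α (k - 1)) ^ 2)
    (hδ : 0 < δ) (hδ' : δ ≤ 1 / (4 * (1 + α 0))) :
    ∀ k : ℕ, α k ≤ 2 + (4 : ℝ) ^ ((1 : ℝ) - 2 ^ k) * α 0 :=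
  stmt3_general α δ hnonneg hrec hδ'
end

section
/- Let V be a finite-dimensional real inner product space with inner product [·,·], let B and C be symmetric operators on V with C positive definite, and suppose the inf-sup bounds c₁ ‖x‖_* ≤ sup_{y≠0} [Bx, y]/‖y‖_* ≤ c₂ ‖x‖_* hold for some norm ‖·‖_* with [Cy,y] ≍ ‖y‖_*² (constants c₃ ‖y‖_*² ≤ [Cy,y] ≤ c₄ ‖y‖_*²). Then [B C⁻¹ B x, x] ≍ ‖x‖_*², i.e. there are constants depending only on c₁,...,c₄ with lower bound (c₁²/c₄)‖x‖_*² and upper bound (c₂²/c₃)‖x‖_*². -/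
/-!
With `r = C⁻¹ B x` we have `C r = B x`, so `[B C⁻¹ B x, x] = [r, B x] = [C r, r]`. Cauchy–Schwarz
for the form `[C ·, ·]` gives `[B x, y]² ≤ [C r, r] [C y, y] ≤ c₄ [C r, r] ‖y‖_*²`, so the inf-sup
lower bound yields `c₁² ‖x‖_*² ≤ c₄ [C r, r]`. Testing the inf-sup upper bound with `y = r` gives
`c₃ ‖r‖_*² ≤ [C r, r] = [B x, r] ≤ c₂ ‖x‖_* ‖r‖_*`, and eliminating `‖r‖_*` gives
`[C r, r] ≤ (c₂² / c₃) ‖x‖_*²`.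
-/

theorem le_sq_div_of_le_mul {a b c q : ℝ} (hc : 0 < c) (hb : c * b ^ 2 ≤ q)
    (hab : q ≤ a * b) : q ≤ a ^ 2 / c := by
  rw [le_div_iff₀ hc]
  nlinarith [sq_nonneg (a - c * b)]

open RealInnerProductSpace

section

variable {V : Type*} [NormedAddCommGroup V] [InnerProductSpace ℝ V]

/-- An empty supremum, hence `0`, when `V` is trivial. -/
noncomputable def dualNorm (N : V → ℝ) (v : V) : ℝ :=
  ⨆ y : {y : V // y ≠ 0}, ⟪v, (y : V)⟫ / N (y : V)

theorem LinearMap.IsSymmetric.inner_map_sq_le {T : V →ₗ[ℝ] V} (hT : T.IsSymmetric)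
    (hT₀ : ∀ x, 0 ≤ ⟪T x, x⟫) (x y : V) : ⟪T x, y⟫ ^ 2 ≤ ⟪T x, x⟫ * ⟪T y, y⟫ := by
  have := LinearMap.BilinForm.apply_mul_apply_le_of_forall_zero_le (innerₗ V ∘ₗ T) hT₀ x y
  simpa [sq, hT y x, real_inner_comm] using this

variable {T : V →ₗ[ℝ] V} (hT : T.IsSymmetric) (hT₀ : ∀ x, 0 ≤ ⟪T x, x⟫)
  {N : V → ℝ} (hN : ∀ y, y ≠ 0 → 0 < N y)
include hT hT₀

theorem inner_map_div_le_sqrt {c : ℝ} (hTN : ∀ y, ⟪T y, y⟫ ≤ c * N y ^ 2) (r : V) {y : V}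
    (hy : 0 < N y) : ⟪T r, y⟫ / N y ≤ √(c * ⟪T r, r⟫) := by
  have hsq : ⟪T r, y⟫ ^ 2 ≤ c * ⟪T r, r⟫ * N y ^ 2 :=
    calc ⟪T r, y⟫ ^ 2 ≤ ⟪T r, r⟫ * ⟪T y, y⟫ := hT.inner_map_sq_le hT₀ r y
      _ ≤ ⟪T r, r⟫ * (c * N y ^ 2) := mul_le_mul_of_nonneg_left (hTN y) (hT₀ r)
      _ = c * ⟪T r, r⟫ * N y ^ 2 := by ring
  rw [div_le_iff₀ hy]
  calc ⟪T r, y⟫ ≤ √(c * ⟪T r, r⟫ * N y ^ 2) := Real.le_sqrt_of_sq_le hsq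
    _ = √(c * ⟪T r, r⟫) * N y := by rw [Real.sqrt_mul' _ (sq_nonneg _), Real.sqrt_sq hy.le]

include hN

theorem dualNorm_map_le_sqrt {c : ℝ} (hTN : ∀ y, ⟪T y, y⟫ ≤ c * N y ^ 2) (r : V) :
    dualNorm N (T r) ≤ √(c * ⟪T r, r⟫) :=
  Real.iSup_le (fun y ↦ inner_map_div_le_sqrt hT hT₀ hTN r (hN y y.2)) (Real.sqrt_nonneg _)

theorem inner_map_le_dualNorm_mul {c : ℝ} (hTN : ∀ y, ⟪T y, y⟫ ≤ c * N y ^ 2) (r : V) {y : V}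
    (hy : y ≠ 0) : ⟪T r, y⟫ ≤ dualNorm N (T r) * N y := by
  have hbdd : BddAbove (Set.range fun y : {y : V // y ≠ 0} ↦ ⟪T r, (y : V)⟫ / N (y : V)) :=
    ⟨_, Set.forall_mem_range.2 fun y ↦ inner_map_div_le_sqrt hT hT₀ hTN r (hN y y.2)⟩
  rw [← div_le_iff₀ (hN y hy)]
  exact le_ciSup hbdd ⟨y, hy⟩

theorem sq_div_le_inner_map_of_le_dualNorm {c : ℝ} (hc : 0 < c)
    (hTN : ∀ y, ⟪T y, y⟫ ≤ c * N y ^ 2) {a : ℝ} (ha : 0 ≤ a) {r : V}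
    (h : a ≤ dualNorm N (T r)) : a ^ 2 / c ≤ ⟪T r, r⟫ := by
  have hsqrt : a ≤ √(c * ⟪T r, r⟫) := h.trans (dualNorm_map_le_sqrt hT hT₀ hN hTN r)
  rw [div_le_iff₀ hc, mul_comm]
  exact (Real.le_sqrt ha (mul_nonneg hc.le (hT₀ r))).1 hsqrt

theorem inner_map_le_sq_div_of_dualNorm_le {c c' : ℝ} (hc : 0 < c)
    (hNT : ∀ y, c * N y ^ 2 ≤ ⟪T y, y⟫) (hTN : ∀ y, ⟪T y, y⟫ ≤ c' * N y ^ 2) {a : ℝ} {r : V}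
    (h : dualNorm N (T r) ≤ a) : ⟪T r, r⟫ ≤ a ^ 2 / c := by
  rcases eq_or_ne r 0 with rfl | hr
  · simpa using div_nonneg (sq_nonneg a) hc.le
  refine le_sq_div_of_le_mul hc (hNT r) ?_
  calc ⟪T r, r⟫ ≤ dualNorm N (T r) * N r := inner_map_le_dualNorm_mul hT hT₀ hN hTN r hr
    _ ≤ a * N r := mul_le_mul_of_nonneg_right h (hN r hr).le

end

open RealInnerProductSpace in
theorem stmt11_general {V : Type*} [NormedAddCommGroup V] [InnerProductSpace ℝ V]
    (B C Cinv : V →ₗ[ℝ] V)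
    (hB : ∀ x y : V, ⟪B x, y⟫ = ⟪x, B y⟫)
    (hC : ∀ x y : V, ⟪C x, y⟫ = ⟪x, C y⟫)
    (hCinv₂ : C ∘ₗ Cinv = LinearMap.id)
    (N : V → ℝ) (hN : ∀ y : V, y ≠ 0 → 0 < N y)
    (c₁ c₂ c₃ c₄ : ℝ) (hc₁ : 0 < c₁) (hc₃ : 0 < c₃) (hc₄ : 0 < c₄)
    (hsuplow : ∀ x : V, c₁ * N x ≤ ⨆ y : {y : V // y ≠ 0}, ⟪B x, (y : V)⟫ / N (y : V))
    (hsuphigh : ∀ x : V, (⨆ y : {y : V // y ≠ 0}, ⟪B x, (y : V)⟫ / N (y : V)) ≤ c₂ * N x)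
    (hCequiv₁ : ∀ y : V, c₃ * N y ^ 2 ≤ ⟪C y, y⟫)
    (hCequiv₂ : ∀ y : V, ⟪C y, y⟫ ≤ c₄ * N y ^ 2) :
    ∀ x : V, c₁ ^ 2 / c₄ * N x ^ 2 ≤ ⟪B (Cinv (B x)), x⟫ ∧
      ⟪B (Cinv (B x)), x⟫ ≤ c₂ ^ 2 / c₃ * N x ^ 2 := by
  intro x
  have hC₀ (y : V) : 0 ≤ ⟪C y, y⟫ := (by positivity : 0 ≤ c₃ * N y ^ 2).trans (hCequiv₁ y)
  have hN₀ : 0 ≤ N x := by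
    rcases eq_or_ne x 0 with rfl | hx
    · have h0 : c₃ * N 0 ^ 2 ≤ 0 := by simpa using hCequiv₁ 0
      have : N 0 = 0 := by simpa [hc₃.ne'] using le_antisymm h0 (by positivity)
      exact this.ge
    · exact (hN x hx).le
  set r := Cinv (B x)
  have hCr : C r = B x := LinearMap.congr_fun hCinv₂ (B x)
  have hquad : ⟪B r, x⟫ = ⟪C r, r⟫ := by rw [hB, ← hCr, real_inner_comm]
  have hlow : c₁ * N x ≤ dualNorm N (C r) := hCr ▸ hsuplow x
  have hhigh : dualNorm N (C r) ≤ c₂ * N x := hCr ▸ hsuphigh x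
  rw [hquad]
  constructor
  · calc c₁ ^ 2 / c₄ * N x ^ 2 = (c₁ * N x) ^ 2 / c₄ := by ring
      _ ≤ ⟪C r, r⟫ := sq_div_le_inner_map_of_le_dualNorm hC hC₀ hN hc₄ hCequiv₂
          (mul_nonneg hc₁.le hN₀) hlow
  · calc ⟪C r, r⟫ ≤ (c₂ * N x) ^ 2 / c₃ :=
          inner_map_le_sq_div_of_dualNorm_le hC hC₀ hN hc₃ hCequiv₁ hCequiv₂ hhigh
      _ = c₂ ^ 2 / c₃ * N x ^ 2 := by ring

open RealInnerProductSpace in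
theorem stmt11 {V : Type*} [NormedAddCommGroup V] [InnerProductSpace ℝ V]
    [FiniteDimensional ℝ V]
    (B C Cinv : V →ₗ[ℝ] V)
    (hB : ∀ x y : V, ⟪B x, y⟫ = ⟪x, B y⟫)
    (hC : ∀ x y : V, ⟪C x, y⟫ = ⟪x, C y⟫)
    (hCpos : ∀ x : V, x ≠ 0 → 0 < ⟪C x, x⟫)
    (hCinv₁ : Cinv ∘ₗ C = LinearMap.id) (hCinv₂ : C ∘ₗ Cinv = LinearMap.id)
    (N : V → ℝ) (hN : ∀ y : V, y ≠ 0 → 0 < N y)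
    (c₁ c₂ c₃ c₄ : ℝ) (hc₁ : 0 < c₁) (hc₂ : 0 < c₂) (hc₃ : 0 < c₃) (hc₄ : 0 < c₄)
    (hsuplow : ∀ x : V, c₁ * N x ≤ ⨆ y : {y : V // y ≠ 0}, ⟪B x, (y : V)⟫ / N (y : V))
    (hsuphigh : ∀ x : V, (⨆ y : {y : V // y ≠ 0}, ⟪B x, (y : V)⟫ / N (y : V)) ≤ c₂ * N x)
    (hCequiv₁ : ∀ y : V, c₃ * N y ^ 2 ≤ ⟪C y, y⟫)
    (hCequiv₂ : ∀ y : V, ⟪C y, y⟫ ≤ c₄ * N y ^ 2) :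
    ∀ x : V, c₁ ^ 2 / c₄ * N x ^ 2 ≤ ⟪B (Cinv (B x)), x⟫ ∧
      ⟪B (Cinv (B x)), x⟫ ≤ c₂ ^ 2 / c₃ * N x ^ 2 :=
  stmt11_general B C Cinv hB hC hCinv₂ N hN c₁ c₂ c₃ c₄ hc₁ hc₃ hc₄ hsuplow hsuphigh hCequiv₁
    hCequiv₂
end
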